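/- arXiv:2405.10224 — 3 statements merged into one kernel-verified Lean document; each statement's English description precedes it below -/
import Mathlib

section
/- Let g ≥ 1, 0 < c < 1 and 0 < ε < 1. Let J be the (2g+1)×(2g+1) antidiagonal matrix, let n ∈ SL_{2g+1}(ℝ) be a lower-triangular unipotent matrix with n·(JnᵀJ) = 1, and let t = diag(t₁^{−1}, …, t_g^{−1}, 1, t_g, …, t₁) where t₁,…,t_g > 0 satisfy t_i/t_{i+1} > c for 1 ≤ i ≤ g−1 and t_g > c. Define the inner product H on ℝ^{2g+1} by H(v,w) = ⟨(nt)^{−1}v, (nt)^{−1}w⟩, where ⟨·,·⟩ is the standard inner product. If there exists a nonzero vector w ∈ ℤ^{2g+1} with H(w,w)^{1/2} < c^g·ε, then t₁ > 1/ε. -/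
/-!
Write `w = n D u` with `D = diag d`. As `n` is lower unitriangular, the first nonzero coordinate
`w k` of an integral vector satisfies `d k * u k = w k`, so `|w k| ≥ 1` gives
`(d k)⁻¹ ≤ |u k| ≤ H(w,w)^{1/2} < c^g ε`. The ratio bounds on `t` give
`c^g d k ≤ max 1 (c t₁)` for every `k`, and `ε < 1` excludes the first alternative,
so `1 < ε c t₁ < ε t₁`.
-/

open Matrix

section LowerUnitriangular

variable {R ι : Type*} [Semiring R] [Fintype ι] [LinearOrder ι] {n : Matrix ι ι R}

theorem mulVec_apply_eq_self_of_lowerUnitriangular (hlow : n.IsLowerTriangular)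
    (hdiag : ∀ i, n i i = 1) {x : ι → R} {j : ι} (hx : ∀ i < j, x i = 0) :
    (n *ᵥ x) j = x j := by
  rw [mulVec, dotProduct, Finset.sum_eq_single j]
  · simp [hdiag]
  · intro i _ hij
    rcases hij.lt_or_gt with h | h
    · simp [hx i h]
    · simp [hlow h]
  · simp

theorem eq_zero_of_lowerUnitriangular_mulVec_eq_zero (hlow : n.IsLowerTriangular)
    (hdiag : ∀ i, n i i = 1) {x : ι → R} {k : ι} (hw : ∀ j < k, (n *ᵥ x) j = 0) :
    ∀ j < k, x j = 0 := by
  intro j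
  induction j using WellFoundedLT.induction with
  | _ j ih =>
    intro hjk
    rw [← mulVec_apply_eq_self_of_lowerUnitriangular hlow hdiag
      fun i hi => ih i hi (hi.trans hjk)]
    exact hw j hjk

end LowerUnitriangular

theorem det_eq_one_of_lowerUnitriangular {R ι : Type*} [CommRing R] [Fintype ι] [LinearOrder ι]
    {n : Matrix ι ι R} (hlow : n.IsLowerTriangular) (hdiag : ∀ i, n i i = 1) :
    n.det = 1 := by
  rw [det_of_isLowerTriangular n hlow]
  simp [hdiag]

theorem abs_le_sqrt_dotProduct_self {ι : Type*} [Fintype ι] (u : ι → ℝ) (k : ι) :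
    |u k| ≤ √(u ⬝ᵥ u) :=
  Real.abs_le_sqrt <| by
    rw [sq, dotProduct]
    exact Finset.single_le_sum (fun i _ => mul_self_nonneg (u i)) (Finset.mem_univ k)

theorem exists_inv_abs_le_sqrt_of_lowerUnitriangular {ι : Type*} [Fintype ι] [LinearOrder ι]
    {n : Matrix ι ι ℝ} (hlow : n.IsLowerTriangular) (hdiag : ∀ i, n i i = 1)
    {d : ι → ℝ} (hd : ∀ i, d i ≠ 0) {w : ι → ℤ} (hw : w ≠ 0) :
    ∃ k, |d k|⁻¹ ≤ √(((n * diagonal d)⁻¹ *ᵥ fun i => (w i : ℝ)) ⬝ᵥ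
      ((n * diagonal d)⁻¹ *ᵥ fun i => (w i : ℝ))) := by
  set W : ι → ℝ := fun i => (w i : ℝ)
  set u := (n * diagonal d)⁻¹ *ᵥ W
  obtain ⟨k, hwk, hmin⟩ := wellFounded_lt.has_min {j | w j ≠ 0} (Function.ne_iff.mp hw)
  have hdet : IsUnit (n * diagonal d).det := by
    rw [det_mul, det_eq_one_of_lowerUnitriangular hlow hdiag, det_diagonal, one_mul]
    exact (Finset.prod_ne_zero_iff.mpr fun i _ => hd i).isUnit
  have hnu : n *ᵥ (diagonal d *ᵥ u) = W := by
    rw [mulVec_mulVec, mulVec_mulVec, mul_nonsing_inv _ hdet, one_mulVec]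
  have hW : ∀ j < k, (n *ᵥ (diagonal d *ᵥ u)) j = 0 := by
    intro j hj
    rw [hnu]
    simpa [W] using not_imp_comm.mp (hmin j) (not_not.mpr hj)
  have huk : d k * u k = W k := by
    rw [← hnu, mulVec_apply_eq_self_of_lowerUnitriangular hlow hdiag
      (eq_zero_of_lowerUnitriangular_mulVec_eq_zero hlow hdiag hW), mulVec_diagonal]
  have hWk : 1 ≤ |W k| := by simpa [W] using (Int.cast_le (R := ℝ)).mpr (Int.one_le_abs hwk)
  refine ⟨k, ?_⟩
  calc |d k|⁻¹ ≤ |d k|⁻¹ * |W k| := le_mul_of_one_le_right (by positivity) hWk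
    _ = |u k| := by rw [← huk, abs_mul, inv_mul_cancel_left₀ (abs_ne_zero.mpr (hd k))]
    _ ≤ _ := abs_le_sqrt_dotProduct_self u k

noncomputable def torusDiag (g : ℕ) (t : ℕ → ℝ) (k : Fin (2 * g + 1)) : ℝ :=
  if (k : ℕ) < g then (t ((k : ℕ) + 1))⁻¹ else if (k : ℕ) = g then 1 else t (2 * g + 1 - (k : ℕ))

section TorusBounds

variable {c : ℝ} {g : ℕ} {t : ℕ → ℝ}

theorem pow_mul_le_of_mul_le (hc : 0 ≤ c) (ht : ∀ i, 1 ≤ i → i < g → c * t (i + 1) ≤ t i) :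
    ∀ i, 1 ≤ i → i ≤ g → c ^ (i - 1) * t i ≤ t 1 := by
  intro i hi
  induction i, hi using Nat.le_induction with
  | base => simp
  | succ i hi ih =>
    intro hig
    calc c ^ (i + 1 - 1) * t (i + 1) = c ^ (i - 1) * (c * t (i + 1)) := by
          rw [Nat.add_sub_cancel, ← mul_assoc, ← pow_succ, Nat.sub_add_cancel hi]
      _ ≤ c ^ (i - 1) * t i := mul_le_mul_of_nonneg_left (ht i hi (by omega)) (by positivity)
      _ ≤ t 1 := ih (by omega)

theorem pow_lt_of_mul_lt (hc : 0 ≤ c) (ht : ∀ i, 1 ≤ i → i < g → c * t (i + 1) < t i)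
    (htg : c < t g) : ∀ j i, 1 ≤ i → i + j = g → c ^ (j + 1) < t i := by
  intro j
  induction j with
  | zero => rintro i - rfl; simpa using htg
  | succ j ih =>
    intro i hi hij
    calc c ^ (j + 1 + 1) = c * c ^ (j + 1) := pow_succ' _ _
      _ ≤ c * t (i + 1) := mul_le_mul_of_nonneg_left (ih (i + 1) (by omega) (by omega)).le hc
      _ < t i := ht i hi (by omega)

theorem torusDiag_pos (ht_pos : ∀ i, 1 ≤ i → i ≤ g → 0 < t i) (k : Fin (2 * g + 1)) :
    0 < torusDiag g t k := by
  have := k.isLt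
  unfold torusDiag
  split_ifs
  · exact inv_pos.mpr (ht_pos _ (by omega) (by omega))
  · exact one_pos
  · exact ht_pos _ (by omega) (by omega)

theorem pow_mul_torusDiag_le (hc : 0 ≤ c) (hc1 : c ≤ 1) (ht_pos : ∀ i, 1 ≤ i → i ≤ g → 0 < t i)
    (ht : ∀ i, 1 ≤ i → i < g → c * t (i + 1) < t i) (htg : c < t g) (k : Fin (2 * g + 1)) :
    c ^ g * torusDiag g t k ≤ max 1 (c * t 1) := by
  have := k.isLt
  unfold torusDiag
  split_ifs with hlt heq
  · apply le_max_of_le_left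
    rw [← div_eq_mul_inv, div_le_one (ht_pos _ (by omega) (by omega))]
    calc c ^ g ≤ c ^ (g - k - 1 + 1) := pow_le_pow_of_le_one hc hc1 (by omega)
      _ ≤ t (k + 1) := (pow_lt_of_mul_lt hc ht htg _ _ (by omega) (by omega)).le
  · simpa using le_max_of_le_left (pow_le_one₀ hc hc1)
  · apply le_max_of_le_right
    set i := 2 * g + 1 - (k : ℕ) with hi_def
    have hi : 0 ≤ t i := (ht_pos i (by omega) (by omega)).le
    calc c ^ g * t i = c * (c ^ (g - 1) * t i) := by
          rw [← mul_assoc, ← pow_succ', Nat.sub_add_cancel (by omega)]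
      _ ≤ c * (c ^ (i - 1) * t i) := by
          have := pow_le_pow_of_le_one hc hc1 (show i - 1 ≤ g - 1 by omega)
          gcongr
      _ ≤ c * t 1 := by
          gcongr
          exact pow_mul_le_of_mul_le hc (fun i h1 h2 => (ht i h1 h2).le) i
            (by omega) (by omega)

end TorusBounds

theorem stmt_4_general (g : ℕ) (c ε : ℝ) (hc0 : 0 < c) (hc1 : c < 1)
    (hε0 : 0 < ε) (hε1 : ε < 1)
    (n : Matrix (Fin (2*g+1)) (Fin (2*g+1)) ℝ)
    (hn_lower : ∀ i j : Fin (2*g+1), i < j → n i j = 0)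
    (hn_diag : ∀ i, n i i = 1)
    (t : ℕ → ℝ)
    (ht_pos : ∀ i, 1 ≤ i → i ≤ g → 0 < t i)
    (ht_ratio : ∀ i, 1 ≤ i → i ≤ g - 1 → t i / t (i+1) > c)
    (ht_g : t g > c)
    (d : Fin (2*g+1) → ℝ)
    (hd : ∀ k : Fin (2*g+1), d k = if (k:ℕ) < g then (t ((k:ℕ)+1))⁻¹
          else if (k:ℕ) = g then 1 else t (2*g+1 - (k:ℕ)))
    (H : (Fin (2*g+1) → ℝ) → (Fin (2*g+1) → ℝ) → ℝ)
    (hH : ∀ v w, H v w = dotProduct (Matrix.mulVec (n * Matrix.diagonal d)⁻¹ v)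
          (Matrix.mulVec (n * Matrix.diagonal d)⁻¹ w))
    (w : Fin (2*g+1) → ℤ) (hw : w ≠ 0)
    (hshort : Real.sqrt (H (fun i => (w i : ℝ)) (fun i => (w i : ℝ))) < c^g * ε) :
    t 1 > 1/ε := by
  obtain rfl : d = torusDiag g t := funext hd
  have ht_lt : ∀ i, 1 ≤ i → i < g → c * t (i + 1) < t i := fun i h1 h2 =>
    (lt_div_iff₀ (ht_pos _ (by omega) (by omega))).mp (ht_ratio i h1 (by omega))
  have hd_pos := torusDiag_pos ht_pos
  obtain ⟨k, hk⟩ := exists_inv_abs_le_sqrt_of_lowerUnitriangular (fun i j h => hn_lower i j h)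
    hn_diag (fun k => (hd_pos k).ne') hw
  rw [← hH, abs_of_pos (hd_pos k)] at hk
  have hlarge : 1 < ε * (c ^ g * torusDiag g t k) := by
    calc 1 < c ^ g * ε * torusDiag g t k :=
          (inv_lt_iff_one_lt_mul₀ (hd_pos k)).mp (hk.trans_lt hshort)
      _ = ε * (c ^ g * torusDiag g t k) := by ring
  have hbound := mul_le_mul_of_nonneg_left
    (pow_mul_torusDiag_le hc0.le hc1.le ht_pos ht_lt ht_g k) hε0.le
  rw [mul_max_of_nonneg _ _ hε0.le, mul_one] at hbound
  have hct : 1 < ε * (c * t 1) := (lt_max_iff.mp (hlarge.trans_le hbound)).resolve_left hε1.not_gt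
  rw [gt_iff_lt, div_lt_iff₀ hε0]
  nlinarith

theorem stmt_4 (g : ℕ) (hg : 1 ≤ g) (c ε : ℝ) (hc0 : 0 < c) (hc1 : c < 1)
    (hε0 : 0 < ε) (hε1 : ε < 1)
    (J : Matrix (Fin (2*g+1)) (Fin (2*g+1)) ℝ)
    (hJ : ∀ i j, J i j = if (i:ℕ) + (j:ℕ) = 2*g then 1 else 0)
    (n : Matrix (Fin (2*g+1)) (Fin (2*g+1)) ℝ)
    (hn_lower : ∀ i j : Fin (2*g+1), i < j → n i j = 0)
    (hn_diag : ∀ i, n i i = 1)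
    (hn_det : n.det = 1)
    (hnG : n * (J * n.transpose * J) = 1)
    (t : ℕ → ℝ)
    (ht_pos : ∀ i, 1 ≤ i → i ≤ g → 0 < t i)
    (ht_ratio : ∀ i, 1 ≤ i → i ≤ g - 1 → t i / t (i+1) > c)
    (ht_g : t g > c)
    (d : Fin (2*g+1) → ℝ)
    (hd : ∀ k : Fin (2*g+1), d k = if (k:ℕ) < g then (t ((k:ℕ)+1))⁻¹
          else if (k:ℕ) = g then 1 else t (2*g+1 - (k:ℕ)))
    (H : (Fin (2*g+1) → ℝ) → (Fin (2*g+1) → ℝ) → ℝ)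
    (hH : ∀ v w, H v w = dotProduct (Matrix.mulVec (n * Matrix.diagonal d)⁻¹ v)
          (Matrix.mulVec (n * Matrix.diagonal d)⁻¹ w))
    (w : Fin (2*g+1) → ℤ) (hw : w ≠ 0)
    (hshort : Real.sqrt (H (fun i => (w i : ℝ)) (fun i => (w i : ℝ))) < c^g * ε) :
    t 1 > 1/ε :=
  stmt_4_general g c ε hc0 hc1 hε0 hε1 n hn_lower hn_diag t ht_pos ht_ratio ht_g d hd H hH w hw
    hshort
end

section
/- Let g ≥ 1 and let f ∈ ℚ[x] be monic of degree 2g+1 and squarefree, with complex roots ω₁,…,ω_{2g+1}. Let U ∈ ℚ[x] be coprime to f, of degree m, and let A = ℚ[x]/(f) with B(v,w) = (−1)^m·τ(v·w·U^{−1}), where τ : A → ℚ sends a class to the coefficient of x^{2g} in its representative of degree ≤ 2g and U^{−1} is the inverse of the class of U in A. Let T : A⊗_ℚℝ → A⊗_ℚℝ be multiplication by x, and let H be any inner product on A⊗_ℚℝ that is compatible with the ℝ-bilinear extension of B and such that T commutes with its H-adjoint. Then H(U, U) = Σ_{i=1}^{2g+1} |U(ω_i)| / |f′(ω_i)|, where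 U denotes the class of U in A ⊆ A⊗_ℚℝ. -/
open Polynomial

/-- An inner product: a symmetric positive-definite bilinear form. -/
def IsInnerProduct {V : Type*} [AddCommGroup V] [Module ℝ V]
    (H : LinearMap.BilinForm ℝ V) : Prop :=
  (∀ v w : V, H v w = H w v) ∧ ∀ v : V, v ≠ 0 → 0 < H v v

/-- `H` is compatible with the bilinear form `B`: the endomorphism `S` determined by
`B v w = H (S v) w` is an `H`-isometry. -/
def CompatibleWith {V : Type*} [AddCommGroup V] [Module ℝ V]
    (B : V → V → ℝ) (H : LinearMap.BilinForm ℝ V) : Prop :=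
  ∃ S : V →ₗ[ℝ] V, (∀ v w : V, B v w = H (S v) w) ∧ ∀ v w : V, H (S v) (S w) = H v w

/-- `T` commutes with its `H`-adjoint. -/
def CommutesWithAdjoint {V : Type*} [AddCommGroup V] [Module ℝ V]
    (H : LinearMap.BilinForm ℝ V) (T : V →ₗ[ℝ] V) : Prop :=
  ∃ T' : V →ₗ[ℝ] V, (∀ v w : V, H (T v) w = H v (T' w)) ∧ T ∘ₗ T' = T' ∘ₗ T

/-!
Evaluation at the roots `ω_i` identifies `ℝ[x]/(f)` with the conjugation-symmetric vectors of
`ℂ^(2g+1)`, and Euler's formula `τ(a) = Σ a(ω_i) / f'(ω_i)` turns every form built from `τ` into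
a diagonal one. Normality of multiplication by `x` makes the `H`-adjoint of multiplication by `a`
multiplication by `σ(a)` for an algebra endomorphism `σ`, which permutes the roots by some `π`.
Compatibility then gives `S(a) = σ(a) s` with `σ(s) s = 1` and `H(a, b) = B(σ(a) s, b)`, i.e.
`H(a, b) = Σ d_i a(ω_(π i)) b(ω_i)` with `d_i = ± s(ω_i) / (U(ω_i) f'(ω_i))`. Positivity and
symmetry of `H` force `π` to be complex conjugation and every `d_i` to be positive; hence
`|s(ω_i)| = 1`, `d_i = 1 / |U(ω_i) f'(ω_i)|`, and `H(U, U) = Σ d_i |U(ω_i)|²`.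
-/

open Polynomial ComplexConjugate

theorem IsInnerProduct.eq_of_forall_apply_eq {V : Type*} [AddCommGroup V] [Module ℝ V]
    {H : LinearMap.BilinForm ℝ V} (hH : IsInnerProduct H) {x y : V}
    (h : ∀ w, H x w = H y w) : x = y := by
  by_contra hne
  have := hH.2 (x - y) (sub_ne_zero.mpr hne)
  rw [map_sub H x y, LinearMap.sub_apply, h, sub_self] at this
  exact this.false

theorem LinearMap.BilinForm.apply_aeval_mul_eq {R A : Type*} [CommRing R] [CommRing A]
    [Algebra R A] (H : LinearMap.BilinForm R A) {x c : A}
    (h : ∀ v w, H (x * v) w = H v (c * w)) (p : R[X]) (v w : A) :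
    H (aeval x p * v) w = H v (aeval c p * w) := by
  induction p using Polynomial.induction_on generalizing v w with
  | C r => simp [Algebra.algebraMap_eq_smul_one]
  | add p q hp hq => simp only [map_add, add_mul, LinearMap.add_apply, hp, hq]
  | monomial n r ih =>
    calc H (aeval x (C r * X ^ (n + 1)) * v) w
        = H (aeval x (C r * X ^ n) * (x * v)) w := by simp only [map_mul, map_pow, aeval_X]; ring_nf
      _ = H v (c * (aeval c (C r * X ^ n) * w)) := by rw [ih, h]
      _ = H v (aeval c (C r * X ^ (n + 1)) * w) := by simp only [map_mul, map_pow, aeval_X]; ring_nf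

theorem AdjoinRoot.eq_mul_of_map_root_mul {R : Type*} [CommRing R] {f : R[X]}
    (L : AdjoinRoot f →ₗ[R] AdjoinRoot f) (h : ∀ v, L (root f * v) = root f * L v)
    (v : AdjoinRoot f) : L v = L 1 * v := by
  have key : ∀ a ∈ Algebra.adjoin R {root f}, ∀ v, L (a * v) = a * L v := by
    intro a ha
    induction ha using Algebra.adjoin_induction with
    | mem x hx => rw [Set.mem_singleton_iff.mp hx]; exact h
    | algebraMap r =>
      intro v
      rw [Algebra.algebraMap_eq_smul_one, smul_mul_assoc, one_mul, map_smul, smul_mul_assoc,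
        one_mul]
    | add x y _ _ hx hy => intro v; simp only [add_mul, map_add, hx, hy]
    | mul x y _ _ hx hy => intro v; rw [mul_assoc, hx, hy, mul_assoc]
  simpa [mul_comm] using key v (adjoinRoot_eq_top (R := R) (f := f) ▸ Algebra.mem_top) 1

theorem exists_algHom_apply_mul_eq_of_commutesWithAdjoint {f : ℝ[X]}
    {H : LinearMap.BilinForm ℝ (AdjoinRoot f)} (hH : IsInnerProduct H)
    (hT : CommutesWithAdjoint H (LinearMap.mulLeft ℝ (AdjoinRoot.root f))) :
    ∃ σ : AdjoinRoot f →ₐ[ℝ] AdjoinRoot f, ∀ a v w, H (a * v) w = H v (σ a * w) := by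
  obtain ⟨T', hadj, hcomm⟩ := hT
  have hroot : ∀ v w, H (AdjoinRoot.root f * v) w = H v (T' 1 * w) := fun v w => by
    rw [← AdjoinRoot.eq_mul_of_map_root_mul T' (fun v => (LinearMap.congr_fun hcomm v).symm)]
    exact hadj v w
  -- `H (f(T' 1)) w = H (f(x) w) 1 = 0`
  have hf : aeval (T' 1) f = 0 := hH.eq_of_forall_apply_eq fun w => by
    rw [hH.1, ← mul_one (aeval (T' 1) f), ← H.apply_aeval_mul_eq hroot, AdjoinRoot.aeval_eq,
      AdjoinRoot.mk_self, zero_mul]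
    simp
  refine ⟨AdjoinRoot.liftAlgHom f (Algebra.ofId ℝ _) (T' 1) (by simpa [aeval_def] using hf),
    fun a v w => ?_⟩
  obtain ⟨p, rfl⟩ := AdjoinRoot.mk_surjective a
  rw [← AdjoinRoot.aeval_eq, ← aeval_algHom_apply, AdjoinRoot.liftAlgHom_root]
  exact H.apply_aeval_mul_eq hroot p v w

theorem CompatibleWith.exists_apply_eq {A : Type*} [CommRing A] [Algebra ℝ A]
    {H : LinearMap.BilinForm ℝ A} (hH : IsInnerProduct H) {σ : A → A}
    (hσ : ∀ a v w, H (a * v) w = H v (σ a * w)) {β : A → ℝ}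
    (hB : CompatibleWith (fun v w => β (v * w)) H) :
    ∃ s : A, σ s * s = 1 ∧ ∀ a b, H a b = β (σ a * s * b) := by
  obtain ⟨S, hBS, hSS⟩ := hB
  replace hBS : ∀ v w, β (v * w) = H (S v) w := hBS
  have hSsymm : ∀ v w, H (S v) w = H v (S w) := fun v w => by
    rw [← hBS, mul_comm, hBS, hH.1]
  have hSinv : ∀ v, S (S v) = v := fun v => hH.eq_of_forall_apply_eq fun w => by
    rw [hSsymm, hSS]
  have hSmul : ∀ a v, S (a * v) = σ a * S v := fun a v => hH.eq_of_forall_apply_eq fun w => by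
    rw [← hBS, show a * v * w = v * (a * w) by ring, hBS, hH.1, hσ, hH.1]
  refine ⟨S 1, ?_, fun a b => ?_⟩
  · rw [← hSmul, mul_one, hSinv]
  · rw [← hSmul, mul_one, hBS, hSinv]

theorem Polynomial.exists_map_eq_of_map_conj {Q : ℂ[X]} (hQ : Q.map (starRingEnd ℂ) = Q) :
    ∃ r : ℝ[X], r.map (algebraMap ℝ ℂ) = Q := by
  refine (mem_lifts Q).mp (lifts_iff_coeff_lifts Q |>.mpr fun k => ?_)
  have hk : conj (Q.coeff k) = Q.coeff k := by rw [← coeff_map, hQ]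
  exact ⟨(Q.coeff k).re, Complex.conj_eq_iff_re.mp hk⟩

section RootEval

open Finset

variable {ι : Type*} [Fintype ι] {f : ℝ[X]} {ω : ι → ℂ}

theorem aeval_eq_zero_of_map_eq_nodal
    (hf : f.map (algebraMap ℝ ℂ) = Lagrange.nodal univ ω) (i : ι) : aeval (ω i) f = 0 := by
  rw [← eval_map_algebraMap, hf, Lagrange.eval_nodal_at_node (mem_univ i)]

noncomputable def rootEval (hf : f.map (algebraMap ℝ ℂ) = Lagrange.nodal univ ω) (i : ι) :
    AdjoinRoot f →ₐ[ℝ] ℂ :=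
  AdjoinRoot.liftAlgHom f (Algebra.ofId ℝ ℂ) (ω i)
    (by simpa [aeval_def] using aeval_eq_zero_of_map_eq_nodal hf i)

variable (hf : f.map (algebraMap ℝ ℂ) = Lagrange.nodal univ ω)

theorem rootEval_mk (i : ι) (p : ℝ[X]) : rootEval hf i (AdjoinRoot.mk f p) = aeval (ω i) p := by
  rw [rootEval, AdjoinRoot.liftAlgHom_mk, aeval_def]
  rfl

theorem rootEval_root (i : ι) : rootEval hf i (AdjoinRoot.root f) = ω i :=
  AdjoinRoot.liftAlgHom_root ..

theorem exists_eq_rootEval (ψ : AdjoinRoot f →ₐ[ℝ] ℂ) : ∃ j, ψ = rootEval hf j := by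
  have h0 : (Lagrange.nodal univ ω).eval (ψ (AdjoinRoot.root f)) = 0 := by
    rw [← hf, eval_map_algebraMap, AdjoinRoot.aeval_algHom_eq_zero]
  obtain ⟨j, -, hj⟩ := prod_eq_zero_iff.mp (Lagrange.eval_nodal.symm.trans h0)
  exact ⟨j, AdjoinRoot.algHom_ext (by rw [rootEval_root, sub_eq_zero.mp hj])⟩

theorem rootEval_injective (hω : Function.Injective ω) : Function.Injective (rootEval hf) :=
  fun i j h => hω (by rw [← rootEval_root hf, h, rootEval_root])

theorem exists_rootEval_conj :
    ∃ cj : ι → ι, ∀ i a, rootEval hf (cj i) a = conj (rootEval hf i a) := by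
  choose cj hcj using fun i => exists_eq_rootEval hf (Complex.conjAe.toAlgHom.comp (rootEval hf i))
  exact ⟨cj, fun i a => by rw [← hcj]; rfl⟩

theorem involutive_of_rootEval_conj (hω : Function.Injective ω) {cj : ι → ι}
    (hcj : ∀ i a, rootEval hf (cj i) a = conj (rootEval hf i a)) : Function.Involutive cj :=
  fun i => rootEval_injective hf hω (AlgHom.ext fun a => by rw [hcj, hcj, Complex.conj_conj])

theorem exists_rootEval_eq [DecidableEq ι] (hω : Function.Injective ω) {cj : ι → ι}
    (hcj : ∀ i a, rootEval hf (cj i) a = conj (rootEval hf i a)) {z : ι → ℂ}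
    (hz : ∀ i, z (cj i) = conj (z i)) : ∃ a, ∀ i, rootEval hf i a = z i := by
  have hinj : Set.InjOn ω (univ : Finset ι) := hω.injOn
  set Q := Lagrange.interpolate univ ω z
  have hQ : ∀ i, Q.eval (ω i) = z i := fun i =>
    Lagrange.eval_interpolate_at_node _ hinj (mem_univ i)
  have hconj : ∀ i, conj (ω (cj i)) = ω i := fun i => by
    rw [← rootEval_root hf, hcj, Complex.conj_conj, rootEval_root]
  have hQreal : Q.map (starRingEnd ℂ) = Q := by
    refine eq_of_degrees_lt_of_eval_index_eq _ hinj ?_ (Lagrange.degree_interpolate_lt _ hinj)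
      fun i _ => ?_
    · rw [degree_map]; exact Lagrange.degree_interpolate_lt _ hinj
    · rw [← hconj, eval_map, eval₂_at_apply, hQ, hz, Complex.conj_conj, hconj, hQ]
  obtain ⟨r, hr⟩ := exists_map_eq_of_map_conj hQreal
  exact ⟨AdjoinRoot.mk f r, fun i => by rw [rootEval_mk, ← eval_map_algebraMap, hr, hQ]⟩

theorem ofReal_eq_sum_rootEval_div [DecidableEq ι] (hω : Function.Injective ω) {n : ℕ}
    (hn : Fintype.card ι = n + 1) {τ : AdjoinRoot f → ℝ}
    (hτ : ∀ p : ℝ[X], p.natDegree ≤ n → τ (AdjoinRoot.mk f p) = p.coeff n) (a : AdjoinRoot f) :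
    (τ a : ℂ) = ∑ i, rootEval hf i a / rootEval hf i (AdjoinRoot.mk f (derivative f)) := by
  have hmonic : f.Monic := by
    rw [← monic_map_iff (f := algebraMap ℝ ℂ), hf]; exact Lagrange.nodal_monic
  have hdeg : f.degree = (n + 1 : ℕ) := by
    rw [← degree_map f (algebraMap ℝ ℂ), hf, Lagrange.degree_nodal, card_univ, hn]
  obtain ⟨p, rfl⟩ := AdjoinRoot.mk_surjective a
  have hr : AdjoinRoot.mk f (p %ₘ f) = AdjoinRoot.mk f p := by
    rw [← AdjoinRoot.modByMonicHom_mk hmonic]; exact AdjoinRoot.mk_leftInverse hmonic _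
  have hrdeg : (p %ₘ f).degree < (n + 1 : ℕ) := hdeg ▸ degree_modByMonic_lt p hmonic
  have hcoeff := Lagrange.coeff_eq_sum (s := univ) hω.injOn (P := (p %ₘ f).map (algebraMap ℝ ℂ))
    (by rwa [degree_map, card_univ, hn])
  rw [card_univ, hn, Nat.add_sub_cancel, coeff_map] at hcoeff
  rw [← hr, hτ _ (natDegree_le_iff_degree_le.mpr (Order.le_of_lt_succ hrdeg)),
    ← Complex.coe_algebraMap, hcoeff]
  refine sum_congr rfl fun i _ => ?_
  rw [rootEval_mk, rootEval_mk, ← eval_map_algebraMap, ← eval_map_algebraMap, ← derivative_map, hf,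
    Lagrange.eval_nodal_derivative_eval_node_eq (mem_univ i), Lagrange.eval_nodal]

theorem ofReal_apply_eq_sum_rootEval [DecidableEq ι] (hω : Function.Injective ω) {n : ℕ}
    (hn : Fintype.card ι = n + 1) {τ : AdjoinRoot f → ℝ}
    (hτ : ∀ p : ℝ[X], p.natDegree ≤ n → τ (AdjoinRoot.mk f p) = p.coeff n)
    {H : LinearMap.BilinForm ℝ (AdjoinRoot f)} {σ : AdjoinRoot f → AdjoinRoot f} {π : ι → ι}
    (hπ : ∀ i a, rootEval hf i (σ a) = rootEval hf (π i) a) {m : ℕ} {s uinv : AdjoinRoot f}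
    (hHs : ∀ a b, H a b = (-1 : ℝ) ^ m * τ (σ a * s * b * uinv)) (a b : AdjoinRoot f) :
    (H a b : ℂ) = ∑ i, (-1) ^ m * rootEval hf i (s * uinv) /
      rootEval hf i (AdjoinRoot.mk f (derivative f)) * rootEval hf (π i) a * rootEval hf i b := by
  rw [hHs, Complex.ofReal_mul, ofReal_eq_sum_rootEval_div hf hω hn hτ, mul_sum]
  refine sum_congr rfl fun i _ => ?_
  simp only [map_mul, hπ]
  push_cast
  ring

end RootEval

section ConjSymmetric

open Finset

variable {ι : Type*} [DecidableEq ι]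

def conjPair (cj : ι → ι) (i : ι) (t : ℂ) : ι → ℂ :=
  Pi.single i t + Pi.single (cj i) (conj t)

theorem conjPair_apply_self (cj : ι → ι) (i : ι) (t : ℂ) :
    conjPair cj i t i = t + if i = cj i then conj t else 0 := by
  simp [conjPair, Pi.single_apply]

theorem conjPair_apply_cj {cj : ι → ι} (hcj : Function.Involutive cj) (i : ι) (t : ℂ) (k : ι) :
    conjPair cj i t (cj k) = conj (conjPair cj i t k) := by
  have h : cj k = i ↔ k = cj i := by rw [← hcj.injective.eq_iff, hcj]
  simp only [conjPair, Pi.add_apply, Pi.single_apply, hcj.injective.eq_iff, h, map_add]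
  split_ifs <;> simp [add_comm]

theorem sum_mul_conjPair [Fintype ι] {cj π : ι → ι} {d y : ι → ℂ} (hπ : ∀ k, π (cj k) = cj (π k))
    (hd : ∀ k, d (cj k) = conj (d k)) (hy : ∀ k, y (cj k) = conj (y k)) (i : ι) (t : ℂ) :
    ∑ k, d k * y (π k) * conjPair cj i t k = (2 * (d i * y (π i) * t).re : ℝ) := by
  simp only [conjPair, Pi.add_apply, Pi.single_apply, mul_add, mul_ite, mul_zero, sum_add_distrib,
    sum_ite_eq', mem_univ, if_true]
  rw [hd, hπ, hy, ← map_mul, ← map_mul, Complex.add_conj]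

theorem eq_of_forall_re_sum_pos [Fintype ι] {cj π : ι → ι} {d : ι → ℂ}
    (hcj : Function.Involutive cj)
    (hπ : ∀ k, π (cj k) = cj (π k)) (hd : ∀ k, d (cj k) = conj (d k))
    (hpos : ∀ z : ι → ℂ, (∀ k, z (cj k) = conj (z k)) → z ≠ 0 →
      0 < (∑ k, d k * z (π k) * z k).re) (i : ι) : π i = cj i := by
  have key : ∀ t, conjPair cj i t ≠ 0 → 0 < (d i * conjPair cj i t (π i) * t).re := fun t ht => by
    have := hpos _ (conjPair_apply_cj hcj i t) ht
    rw [sum_mul_conjPair hπ hd (conjPair_apply_cj hcj i t)] at this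
    simpa using this
  have hne : ∀ t, t ≠ 0 → cj i ≠ i → conjPair cj i t ≠ 0 := fun t ht hi h => by
    have := congrFun h i
    rw [conjPair_apply_self, if_neg (Ne.symm hi)] at this
    simp_all
  -- If `π` fixes `i` but `cj` does not, `t = 1` and `t = I` give `0 < Re (d i)` and
  -- `0 < Re (-d i)`; otherwise `conjPair cj i 1` is isotropic.
  by_contra hπi
  by_cases hfix : π i = i
  · have hi : cj i ≠ i := fun h => hπi (hfix.trans h.symm)
    have h1 := key 1 (hne 1 one_ne_zero hi)
    have h2 := key Complex.I (hne _ Complex.I_ne_zero hi)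
    rw [hfix, conjPair_apply_self, if_neg (Ne.symm hi)] at h1 h2
    simp only [add_zero, mul_one, Complex.mul_re, Complex.I_re, mul_zero, Complex.I_im, zero_sub,
      Complex.mul_im, Left.neg_pos_iff] at h1 h2
    linarith
  · have h0 : conjPair cj i 1 ≠ 0 := fun h => by
      have := congrFun h i
      rw [conjPair_apply_self] at this
      split_ifs at this <;> norm_num at this
    have := key 1 h0
    simp [conjPair, hfix, hπi] at this

theorem ofReal_norm_eq_of_forall_re_sum_pos [Fintype ι] {cj : ι → ι} {d : ι → ℂ}
    (hcj : Function.Involutive cj) (hd : ∀ k, d (cj k) = conj (d k))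
    (hsymm : ∀ y z : ι → ℂ, (∀ k, y (cj k) = conj (y k)) → (∀ k, z (cj k) = conj (z k)) →
      ∑ k, d k * y (cj k) * z k = ∑ k, d k * z (cj k) * y k)
    (hpos : ∀ z : ι → ℂ, (∀ k, z (cj k) = conj (z k)) → z ≠ 0 →
      0 < (∑ k, d k * z (cj k) * z k).re) (i : ι) : (‖d i‖ : ℂ) = d i := by
  have hsum := fun (y : ι → ℂ) (hy : ∀ k, y (cj k) = conj (y k)) t =>
    sum_mul_conjPair (π := cj) (fun _ => rfl) hd hy i t
  have hpair := conjPair_apply_cj hcj i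
  have hre : 0 < (d i).re := by
    have h0 : conjPair cj i 1 ≠ 0 := fun h => by
      have := congrFun h i
      rw [conjPair_apply_self] at this
      split_ifs at this <;> norm_num at this
    have := hpos _ (hpair 1) h0
    rw [hsum _ (hpair 1), hpair, conjPair_apply_self] at this
    split_ifs at this <;> norm_num at this <;> linarith
  have hreal : conj (d i) = d i := by
    by_cases hi : cj i = i
    · rw [← hd, hi]
    · -- symmetry between `conjPair cj i 1` and `conjPair cj i I` reads `Im (d i) = -Im (d i)`
      have h := hsymm _ _ (hpair 1) (hpair Complex.I)
      rw [hsum _ (hpair 1), hsum _ (hpair Complex.I), hpair, hpair, conjPair_apply_self,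
        conjPair_apply_self] at h
      replace h := Complex.ofReal_injective h
      simp only [Ne.symm hi, ↓reduceIte, add_zero, map_one, mul_one, Complex.mul_re, Complex.I_re,
        mul_zero, Complex.I_im, zero_sub, mul_neg, Complex.conj_I, Complex.neg_re, neg_neg] at h
      refine Complex.ext (Complex.conj_re _) ?_
      rw [Complex.conj_im]
      linarith
  obtain ⟨r, hr⟩ := Complex.conj_eq_iff_real.mp hreal
  rw [hr] at hre ⊢
  simp [abs_of_pos (by simpa using hre)]

end ConjSymmetric

theorem IsInnerProduct.eq_and_ofReal_norm_eq_of_coord {A : Type*} [Ring A] [Algebra ℝ A]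
    {H : LinearMap.BilinForm ℝ A} (hH : IsInnerProduct H) {ι : Type*} [Fintype ι] [DecidableEq ι]
    {φ : ι → A →ₐ[ℝ] ℂ} {cj π : ι → ι} {d : ι → ℂ} (hcj : Function.Involutive cj)
    (hπ : ∀ k, π (cj k) = cj (π k)) (hd : ∀ k, d (cj k) = conj (d k))
    (hsurj : ∀ z : ι → ℂ, (∀ k, z (cj k) = conj (z k)) → ∃ a, ∀ i, φ i a = z i)
    (hcoord : ∀ a b, (H a b : ℂ) = ∑ i, d i * φ (π i) a * φ i b) :
    π = cj ∧ ∀ i, (‖d i‖ : ℂ) = d i := by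
  have hpos : ∀ z : ι → ℂ, (∀ k, z (cj k) = conj (z k)) → z ≠ 0 →
      0 < (∑ k, d k * z (π k) * z k).re := fun z hz hz0 => by
    obtain ⟨a, ha⟩ := hsurj z hz
    have ha0 : a ≠ 0 := by
      rintro rfl
      exact hz0 (funext fun i => by rw [← ha, map_zero, Pi.zero_apply])
    simp_rw [← ha, ← hcoord, Complex.ofReal_re]
    exact hH.2 a ha0
  obtain rfl : cj = π := (funext (eq_of_forall_re_sum_pos hcj hπ hd hpos)).symm
  refine ⟨rfl, ofReal_norm_eq_of_forall_re_sum_pos hcj hd (fun y z hy hz => ?_) hpos⟩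
  obtain ⟨a, rfl⟩ : ∃ a, (fun i => φ i a) = y := (hsurj y hy).imp fun _ => funext
  obtain ⟨b, rfl⟩ : ∃ b, (fun i => φ i b) = z := (hsurj z hz).imp fun _ => funext
  rw [← hcoord, ← hcoord, hH.1]

open Finset in
theorem inner_self_eq_sum_norm_div {ι : Type*} [Fintype ι] [DecidableEq ι] {f : ℝ[X]}
    {ω : ι → ℂ} (hf : f.map (algebraMap ℝ ℂ) = Lagrange.nodal univ ω) (hω : Function.Injective ω)
    {n : ℕ} (hn : Fintype.card ι = n + 1) {τ : AdjoinRoot f → ℝ}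
    (hτ : ∀ p : ℝ[X], p.natDegree ≤ n → τ (AdjoinRoot.mk f p) = p.coeff n)
    {u uinv : AdjoinRoot f} (hu : u * uinv = 1) (m : ℕ) {H : LinearMap.BilinForm ℝ (AdjoinRoot f)}
    (hH : IsInnerProduct H)
    (hcompat : CompatibleWith (fun v w => (-1 : ℝ) ^ m * τ (v * w * uinv)) H)
    (hcomm : CommutesWithAdjoint H (LinearMap.mulLeft ℝ (AdjoinRoot.root f))) :
    H u u = ∑ i, ‖rootEval hf i u‖ / ‖aeval (ω i) (derivative f)‖ := by
  obtain ⟨σ, hσ⟩ := exists_algHom_apply_mul_eq_of_commutesWithAdjoint hH hcomm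
  obtain ⟨s, hs, hHs⟩ :=
    hcompat.exists_apply_eq (β := fun x => (-1 : ℝ) ^ m * τ (x * uinv)) hH hσ
  obtain ⟨cj, hcj⟩ := exists_rootEval_conj hf
  choose π hπ using fun i => exists_eq_rootEval hf ((rootEval hf i).comp σ)
  have hφσ : ∀ i a, rootEval hf i (σ a) = rootEval hf (π i) a := fun i a => by
    rw [← hπ]; rfl
  set d : ι → ℂ := fun i =>
    (-1) ^ m * rootEval hf i (s * uinv) / rootEval hf i (AdjoinRoot.mk f (derivative f))
  have hcoord : ∀ a b, (H a b : ℂ) = ∑ i, d i * rootEval hf (π i) a * rootEval hf i b :=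
    ofReal_apply_eq_sum_rootEval hf hω hn hτ hφσ hHs
  have hπcj : ∀ i, π (cj i) = cj (π i) := fun i =>
    rootEval_injective hf hω (AlgHom.ext fun a => by rw [← hφσ, hcj, hcj, hφσ])
  have hdcj : ∀ i, d (cj i) = conj (d i) := fun i => by simp [d, hcj]
  obtain ⟨rfl, hd⟩ := hH.eq_and_ofReal_norm_eq_of_coord (involutive_of_rootEval_conj hf hω hcj)
    hπcj hdcj (fun z hz => exists_rootEval_eq hf hω hcj hz) hcoord
  have hs1 : ∀ i, ‖rootEval hf i s‖ = 1 := fun i => by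
    have h := congrArg (rootEval hf i) hs
    rw [map_mul, hφσ, hcj, map_one, Complex.conj_mul'] at h
    exact (pow_eq_one_iff_of_nonneg (norm_nonneg _) two_ne_zero).mp (by exact_mod_cast h)
  have hdu : ∀ i, ‖d i‖ * ‖rootEval hf i u‖ = ‖aeval (ω i) (derivative f)‖⁻¹ := fun i => by
    have h := congrArg (fun a => ‖rootEval hf i a‖) hu
    simp only [map_mul, map_one, norm_mul, norm_one] at h
    simp only [d, norm_div, norm_mul, norm_pow, norm_neg, norm_one, one_pow, one_mul, map_mul,
      hs1, rootEval_mk]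
    rw [div_mul_eq_mul_div, mul_comm, h, one_div]
  apply Complex.ofReal_injective
  rw [hcoord, Complex.ofReal_sum]
  refine sum_congr rfl fun i _ => ?_
  rw [hcj, ← hd, mul_assoc, Complex.conj_mul', div_eq_mul_inv, ← hdu]
  push_cast
  ring

theorem stmt_9_general (g : ℕ) (f : Polynomial ℚ)
    (hsqf : Squarefree f)
    (ω : Fin (2*g+1) → ℂ)
    (hroots : f.map (algebraMap ℚ ℂ) = ∏ i : Fin (2*g+1), (X - C (ω i)))
    (U : Polynomial ℚ) (m : ℕ)
    (τ : AdjoinRoot (f.map (algebraMap ℚ ℝ)) → ℝ)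
    (hτ : ∀ p : Polynomial ℝ, p.natDegree ≤ 2*g →
      τ (AdjoinRoot.mk (f.map (algebraMap ℚ ℝ)) p) = p.coeff (2*g))
    (Uinv : AdjoinRoot (f.map (algebraMap ℚ ℝ)))
    (hUinv : AdjoinRoot.mk (f.map (algebraMap ℚ ℝ)) (U.map (algebraMap ℚ ℝ)) * Uinv = 1)
    (H : LinearMap.BilinForm ℝ (AdjoinRoot (f.map (algebraMap ℚ ℝ))))
    (hinner : IsInnerProduct H)
    (hcompat : CompatibleWith (fun v w => ((-1:ℝ))^m * τ (v * w * Uinv)) H)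
    (hcomm : CommutesWithAdjoint H
      (LinearMap.mulLeft ℝ (AdjoinRoot.root (f.map (algebraMap ℚ ℝ))))) :
    H (AdjoinRoot.mk (f.map (algebraMap ℚ ℝ)) (U.map (algebraMap ℚ ℝ)))
        (AdjoinRoot.mk (f.map (algebraMap ℚ ℝ)) (U.map (algebraMap ℚ ℝ))) =
      ∑ i : Fin (2*g+1),
        ‖aeval (ω i) U‖ / ‖aeval (ω i) (derivative f)‖ := by
  have hf : (f.map (algebraMap ℚ ℝ)).map (algebraMap ℝ ℂ) = Lagrange.nodal Finset.univ ω := by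
    rw [Polynomial.map_map, ← IsScalarTower.algebraMap_eq, hroots, Lagrange.nodal_eq]
  have hω : Function.Injective ω := by
    have hsep : (f.map (algebraMap ℚ ℂ)).Separable :=
      (PerfectField.separable_iff_squarefree.mpr hsqf).map
    rw [hroots] at hsep
    exact separable_prod_X_sub_C_iff.mp hsep
  rw [inner_self_eq_sum_norm_div hf hω (Fintype.card_fin _) hτ hUinv m hinner hcompat hcomm]
  simp only [rootEval_mk, aeval_map_algebraMap, derivative_map]

theorem stmt_9 (g : ℕ) (hg : 1 ≤ g) (f : Polynomial ℚ)
    (hmonic : f.Monic) (hdeg : f.natDegree = 2*g+1) (hsqf : Squarefree f)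
    (ω : Fin (2*g+1) → ℂ)
    (hroots : f.map (algebraMap ℚ ℂ) = ∏ i : Fin (2*g+1), (X - C (ω i)))
    (U : Polynomial ℚ) (m : ℕ) (hUdeg : U.natDegree = m)
    (hcop : IsCoprime U f)
    (τ : AdjoinRoot (f.map (algebraMap ℚ ℝ)) → ℝ)
    (hτ : ∀ p : Polynomial ℝ, p.natDegree ≤ 2*g →
      τ (AdjoinRoot.mk (f.map (algebraMap ℚ ℝ)) p) = p.coeff (2*g))
    (Uinv : AdjoinRoot (f.map (algebraMap ℚ ℝ)))
    (hUinv : AdjoinRoot.mk (f.map (algebraMap ℚ ℝ)) (U.map (algebraMap ℚ ℝ)) * Uinv = 1)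
    (H : LinearMap.BilinForm ℝ (AdjoinRoot (f.map (algebraMap ℚ ℝ))))
    (hinner : IsInnerProduct H)
    (hcompat : CompatibleWith (fun v w => ((-1:ℝ))^m * τ (v * w * Uinv)) H)
    (hcomm : CommutesWithAdjoint H
      (LinearMap.mulLeft ℝ (AdjoinRoot.root (f.map (algebraMap ℚ ℝ))))) :
    H (AdjoinRoot.mk (f.map (algebraMap ℚ ℝ)) (U.map (algebraMap ℚ ℝ)))
        (AdjoinRoot.mk (f.map (algebraMap ℚ ℝ)) (U.map (algebraMap ℚ ℝ))) =
      ∑ i : Fin (2*g+1),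
        ‖aeval (ω i) U‖ / ‖aeval (ω i) (derivative f)‖ :=
  stmt_9_general g f hsqf ω hroots U m τ hτ Uinv hUinv H hinner hcompat hcomm
end

section
/- Let g ≥ 1, δ > 0, X > 0, and let f(x) = x^{2g+1} + c₂x^{2g−1} + ⋯ + c_{2g+1} ∈ ℤ[x] have nonzero discriminant, max_{2≤i≤2g+1}|c_i|^{1/i} < X, and complex roots ω₁,…,ω_{2g+1} satisfying |ω_i − ω_j| > X^{1−δ} for all i ≠ j. Let U(x) = x^m + u₁x^{m−1} + ⋯ + u_m ∈ ℚ[x] with 1 ≤ m ≤ g, having no root in common with f. Then (1/2)·log Σ_{i=1}^{2g+1} |U(ω_i)|/|f′(ω_i)| ≤ (1/2)(m − 2g + δ·g(2g+1))·log X + (1/2)·log max(1, |u₁|, …, |u_m|) + c_{g,m}, where c_{g,m} = (1/2)·log((m+1)(2g+1)·2^{m+2g(2g−1)}). Moreover, if M ≥ 1 is the least positive integer with M·U ∈ ℤ[x], then (1/2)·log M + (1/2)·log Σ_{i=1}^{2g+1} |U(ω_i)|/|f′(ω_i)| ≤ (1/2)·h([1:u₁:⋯:u_m]) + (1/2)(m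 − 2g + δ·g(2g+1))·log X + c_{g,m}. -/
/-!
Write `n = 2g+1`. The height condition bounds the coefficient of `x^k` in `f` by `X^(n-k)`, which
confines every root to the disc `‖ω‖ ≤ 2X` (outside it, `ω^n` dominates the remaining terms).
Hence `‖U(ωᵢ)‖ ≤ (m+1) · max(1, |uⱼ|) · (2X)^m`, while the separation of the roots gives
`‖f'(ωᵢ)‖ = ∏_{j ≠ i} ‖ωᵢ - ωⱼ‖ ≥ X^(2g(1-δ))`. Summing over the `n` roots and taking logarithms
gives the first bound; comparing the powers of `X` needs `X ≥ 1`, which holds because otherwise the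
coefficients of `1` and `x` vanish and `x²` divides the squarefree `f`. For the second bound, `a₀U`
has integer coefficients, so `M ≤ a₀`, and `h([1 : u₁ : ⋯ : u_m]) = log a₀ + log max(1, |uⱼ|)`.
-/

open Polynomial Finset

namespace Polynomial

theorem norm_le_two_mul_of_isRoot {K : Type*} [NormedField K] {p : K[X]} (hp : p.Monic)
    {R : ℝ} (hR : 0 ≤ R) (hcoeff : ∀ k < p.natDegree, ‖p.coeff k‖ ≤ R ^ (p.natDegree - k))
    {z : K} (hz : p.IsRoot z) : ‖z‖ ≤ 2 * R := by
  set n := p.natDegree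
  by_contra! hzR
  set r := ‖z‖
  have hr : 0 < r := by linarith
  have hzn : z ^ n = -∑ k ∈ range n, p.coeff k * z ^ k := by
    have h := hz.eq_zero
    rw [eval_eq_sum_range, sum_range_succ, hp.coeff_natDegree, one_mul] at h
    linear_combination h
  have hle : r ^ n ≤ R * ∑ k ∈ range n, r ^ k * R ^ (n - 1 - k) :=
    calc r ^ n = ‖∑ k ∈ range n, p.coeff k * z ^ k‖ := by rw [← norm_pow, hzn, norm_neg]
      _ ≤ ∑ k ∈ range n, ‖p.coeff k‖ * r ^ k := by
        refine (norm_sum_le _ _).trans_eq (sum_congr rfl fun k _ => ?_)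
        rw [norm_mul, norm_pow]
      _ ≤ ∑ k ∈ range n, R ^ (n - k) * r ^ k := by
        gcongr with k hk
        exact hcoeff k (mem_range.mp hk)
      _ = R * ∑ k ∈ range n, r ^ k * R ^ (n - 1 - k) := by
        rw [mul_sum]
        refine sum_congr rfl fun k hk => ?_
        rw [show n - k = n - 1 - k + 1 by have := mem_range.mp hk; omega, pow_succ]
        ring
  -- `(∑ r^k R^(n-1-k)) (r - R) = r^n - R^n` turns `hle` into `r^n (r - R) ≤ R r^n`.
  have hgeom := geom_sum₂_mul r R n
  nlinarith [mul_le_mul_of_nonneg_right hle (by linarith : 0 ≤ r - R),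
    mul_nonneg hR (pow_nonneg hR n), mul_pos (pow_pos hr n) (by linarith : 0 < r - 2 * R)]

theorem not_squarefree_of_coeff_zero_of_coeff_one {R : Type*} [CommSemiring R] [Nontrivial R]
    {p : R[X]} (h0 : p.coeff 0 = 0) (h1 : p.coeff 1 = 0) : ¬Squarefree p := fun hp =>
  not_isUnit_X <| hp X <| by
    rw [← sq, X_pow_dvd_iff]
    intro d hd
    interval_cases d <;> assumption

theorem eval_derivative_prod_X_sub_C {ι K : Type*} [Fintype ι] [DecidableEq ι] [CommRing K]
    (ω : ι → K) (i : ι) :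
    eval (ω i) (derivative (∏ j, (X - C (ω j)))) = ∏ j ∈ univ.erase i, (ω i - ω j) := by
  have h := Lagrange.eval_nodal_derivative_eval_node_eq (v := ω) (mem_univ i)
  rwa [Lagrange.eval_nodal] at h

end Polynomial

theorem Int.eq_zero_of_abs_rpow_lt_one (c : ℤ) {x : ℝ} (hx : 0 ≤ x) (h : |(c : ℝ)| ^ x < 1) :
    c = 0 := by
  by_contra hc
  have : (1 : ℝ) ≤ |(c : ℝ)| := by exact_mod_cast Int.one_le_abs hc
  exact (Real.one_le_rpow this hx).not_gt h

theorem Real.le_pow_of_rpow_one_div_lt {x y : ℝ} {i : ℕ} (hx : 0 ≤ x) (hy : 0 ≤ y) (hi : i ≠ 0)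
    (h : x ^ (1 / (i : ℝ)) < y) : x ≤ y ^ i := by
  rw [one_div, Real.rpow_inv_lt_iff_of_pos hx hy (by positivity), Real.rpow_natCast] at h
  exact h.le

theorem Finset.sup'_mul_left_of_nonneg {ι : Type*} {s : Finset ι} (H : s.Nonempty) (f : ι → ℝ)
    {a : ℝ} (ha : 0 ≤ a) : s.sup' H (fun i => a * f i) = a * s.sup' H f :=
  (apply_sup'_eq_sup'_comp H (a * ·) fun _ _ => mul_max_of_nonneg _ _ ha).symm

theorem Real.log_sum_div_le {ι : Type*} [Fintype ι] [Nonempty ι] {a b : ι → ℝ} {A D : ℝ}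
    (ha : ∀ i, 0 < a i ∧ a i ≤ A) (hD : 0 < D) (hb : ∀ i, D ≤ b i) :
    Real.log (∑ i, a i / b i) ≤ Real.log (Fintype.card ι) + Real.log A - Real.log D := by
  have hA : 0 < A := (ha (Classical.arbitrary ι)).1.trans_le (ha _).2
  have hsum : ∑ i, a i / b i ≤ Fintype.card ι * (A / D) := by
    simpa using sum_le_card_nsmul univ (fun i => a i / b i) (A / D) fun i _ =>
      div_le_div₀ hA.le (ha i).2 hD (hb i)
  have hpos : 0 < ∑ i, a i / b i :=
    sum_pos (fun i _ => div_pos (ha i).1 (hD.trans_le (hb i))) univ_nonempty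
  rw [← Real.log_mul (by positivity) hA.ne', ← Real.log_div (by positivity) hD.ne', mul_div_assoc]
  exact Real.log_le_log hpos hsum

theorem one_le_of_abs_coeff_rpow_one_div_lt {f : ℤ[X]} (hf : Squarefree (f.map (algebraMap ℤ ℚ)))
    {X : ℝ} {i₀ i₁ : ℕ} (h₀ : |(f.coeff 0 : ℝ)| ^ (1 / (i₀ : ℝ)) < X)
    (h₁ : |(f.coeff 1 : ℝ)| ^ (1 / (i₁ : ℝ)) < X) : 1 ≤ X := by
  by_contra! hX
  refine not_squarefree_of_coeff_zero_of_coeff_one ?_ ?_ hf <;>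
    rw [coeff_map, eq_intCast, Int.cast_eq_zero]
  · exact Int.eq_zero_of_abs_rpow_lt_one _ (by positivity) (h₀.trans hX)
  · exact Int.eq_zero_of_abs_rpow_lt_one _ (by positivity) (h₁.trans hX)

theorem abs_coeff_le_pow_of_abs_rpow_lt {g : ℕ} {f : ℤ[X]} {X : ℝ} (hX : 0 ≤ X)
    (hcoeff : f.coeff (2*g) = 0)
    (hHt : ∀ i ∈ Icc 2 (2*g+1), |(f.coeff (2*g+1-i) : ℝ)| ^ ((1:ℝ)/(i:ℝ)) < X) :
    ∀ k < 2*g+1, |(f.coeff k : ℝ)| ≤ X ^ (2*g+1-k) := by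
  intro k hk
  obtain rfl | hk' := eq_or_lt_of_le (Nat.lt_succ_iff.mp hk)
  · simp [hcoeff, hX]
  have h := hHt (2*g+1-k) (mem_Icc.mpr ⟨by omega, by omega⟩)
  rw [Nat.sub_sub_self hk.le] at h
  exact Real.le_pow_of_rpow_one_div_lt (abs_nonneg _) hX (by omega) h

theorem norm_le_two_mul_of_aeval_eq_zero {f : ℤ[X]} (hf : f.Monic) {R : ℝ} (hR : 0 ≤ R)
    (hcoeff : ∀ k < f.natDegree, |(f.coeff k : ℝ)| ≤ R ^ (f.natDegree - k)) {z : ℂ}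
    (hz : aeval z f = 0) : ‖z‖ ≤ 2 * R := by
  refine norm_le_two_mul_of_isRoot (hf.map (algebraMap ℤ ℂ)) hR (fun k hk => ?_) ?_
  · rw [hf.natDegree_map] at hk ⊢
    simpa [coeff_map] using hcoeff k hk
  · rwa [IsRoot, eval_map_algebraMap]

theorem pow_le_norm_prod_erase_sub {ι K : Type*} [Fintype ι] [DecidableEq ι] [NormedField K]
    (ω : ι → K) {d : ℝ} (hd : 0 ≤ d) (hsep : ∀ i j, i ≠ j → d < ‖ω i - ω j‖) (i : ι) :
    d ^ (Fintype.card ι - 1) ≤ ‖∏ j ∈ univ.erase i, (ω i - ω j)‖ := by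
  rw [norm_prod, ← card_univ, ← card_erase_of_mem (mem_univ i), ← prod_const]
  exact prod_le_prod (fun _ _ => hd) fun j hj => (hsep i j (ne_of_mem_erase hj).symm).le

theorem norm_aeval_X_pow_add_sum_le {m : ℕ} {u : ℕ → ℚ} {B ρ : ℝ} (hB : 1 ≤ B)
    (hu : ∀ i ∈ Icc 1 m, |(u i : ℝ)| ≤ B) (hρ : 1 ≤ ρ) {z : ℂ} (hz : ‖z‖ ≤ ρ) :
    ‖aeval z (X ^ m + ∑ i ∈ Icc 1 m, C (u i) * X ^ (m - i))‖ ≤ (m + 1) * B * ρ ^ m := by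
  have hpow : ∀ k ≤ m, ‖z‖ ^ k ≤ ρ ^ m := fun k hk =>
    (pow_le_pow_left₀ (norm_nonneg z) hz k).trans (pow_le_pow_right₀ hρ hk)
  have hterm : ∀ i ∈ Icc 1 m, ‖(u i : ℂ) * z ^ (m - i)‖ ≤ B * ρ ^ m := fun i hi => by
    rw [norm_mul, norm_pow, ← Complex.ofReal_ratCast, Complex.norm_real, Real.norm_eq_abs]
    exact mul_le_mul (hu i hi) (hpow _ (Nat.sub_le m i)) (by positivity) (by linarith)
  simp only [map_add, map_sum, map_mul, aeval_C, aeval_X_pow, eq_ratCast]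
  calc ‖z ^ m + ∑ i ∈ Icc 1 m, (u i : ℂ) * z ^ (m - i)‖
      ≤ ‖z ^ m‖ + ∑ i ∈ Icc 1 m, ‖(u i : ℂ) * z ^ (m - i)‖ :=
        (norm_add_le _ _).trans (add_le_add_right (norm_sum_le _ _) _)
    _ ≤ B * ρ ^ m + ∑ _i ∈ Icc 1 m, B * ρ ^ m := by
        gcongr with i hi
        · rw [norm_pow]
          exact (hpow m le_rfl).trans (le_mul_of_one_le_left (by positivity) hB)
        · exact hterm i hi
    _ = (m + 1) * B * ρ ^ m := by
        rw [sum_const, Nat.card_Icc, nsmul_eq_mul]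
        push_cast
        ring

theorem exists_intCast_eq_mul_coeff_X_pow_add_sum {m : ℕ} {u : ℕ → ℚ} {a : ℕ}
    (ha : ∀ i ∈ Icc 1 m, ∃ z : ℤ, (a : ℚ) * u i = z) (n : ℕ) :
    ∃ z : ℤ, (a : ℚ) * (X ^ m + ∑ i ∈ Icc 1 m, C (u i) * X ^ (m - i)).coeff n = z := by
  have hlifts : C (a : ℚ) * (X ^ m + ∑ i ∈ Icc 1 m, C (u i) * X ^ (m - i))
      ∈ lifts (algebraMap ℤ ℚ) := by
    rw [mul_add, mul_sum]
    refine add_mem (mul_mem ?_ (X_pow_mem_lifts _ m)) (sum_mem fun i hi => ?_)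
    · exact_mod_cast C_mem_lifts (algebraMap ℤ ℚ) a
    · obtain ⟨z, hz⟩ := ha i hi
      rw [← mul_assoc, ← C_mul, hz]
      exact mul_mem (by simpa using C_mem_lifts (algebraMap ℤ ℚ) z) (X_pow_mem_lifts _ _)
  obtain ⟨z, hz⟩ := (lifts_iff_coeff_lifts _).1 hlifts n
  exact ⟨z, by rw [← coeff_C_mul, ← hz, eq_intCast]⟩

theorem half_log_sum_div_le {g m : ℕ} {δ X B : ℝ} (hδ : 0 ≤ δ) (hX : 1 ≤ X) (hB : 1 ≤ B)
    {a b : Fin (2*g+1) → ℝ} (ha : ∀ i, 0 < a i ∧ a i ≤ (m + 1) * B * (2 * X) ^ m)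
    (hb : ∀ i, (X ^ (1 - δ)) ^ (2*g) ≤ b i) :
    (1/2) * Real.log (∑ i, a i / b i) ≤
      (1/2) * ((m : ℝ) - 2*g + δ * (g * (2*g+1) : ℝ)) * Real.log X + (1/2) * Real.log B
        + (1/2) * Real.log (((m+1) * (2*g+1) * 2^(m + 2*g*(2*g-1)) : ℝ)) := by
  have h := Real.log_sum_div_le ha (by positivity) hb
  have hlogX : 0 ≤ Real.log X := Real.log_nonneg hX
  have hlog2 : 0 ≤ 2 * (g : ℝ) * ((2*g-1 : ℕ) : ℝ) * Real.log 2 := by positivity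
  have hg : (0 : ℝ) ≤ g * (2*g - 1) := by
    rcases Nat.eq_zero_or_pos g with rfl | hg_pos
    · simp
    · have : (1 : ℝ) ≤ g := by exact_mod_cast hg_pos
      nlinarith
  rw [Fintype.card_fin, Real.log_mul (by positivity) (by positivity),
    Real.log_mul (by positivity) (by positivity), Real.log_pow, Real.log_mul two_ne_zero
    (by positivity), Real.log_pow, Real.log_rpow (by positivity)] at h
  rw [Real.log_mul (by positivity) (by positivity), Real.log_mul (by positivity) (by positivity),
    Real.log_pow]
  push_cast at h ⊢
  linarith [mul_nonneg (mul_nonneg hδ hg) hlogX]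

theorem stmt_15_general (g : ℕ) (hg : 1 ≤ g) (δ Xr : ℝ) (hδ : 0 < δ) (hXr : 0 < Xr)
    (f : Polynomial ℤ) (hmonic : f.Monic) (hdeg : f.natDegree = 2*g+1)
    (hcoeff : f.coeff (2*g) = 0) (hdisc : Squarefree (f.map (algebraMap ℤ ℚ)))
    (hHt : ∀ i ∈ Finset.Icc 2 (2*g+1), |(f.coeff (2*g+1-i) : ℝ)| ^ ((1:ℝ)/(i:ℝ)) < Xr)
    (ω : Fin (2*g+1) → ℂ)
    (hroots : f.map (algebraMap ℤ ℂ) = ∏ i : Fin (2*g+1), (X - C (ω i)))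
    (hsep : ∀ i j : Fin (2*g+1), i ≠ j → ‖ω i - ω j‖ > Xr ^ ((1:ℝ) - δ))
    (m : ℕ)
    (u : ℕ → ℚ) (U : Polynomial ℚ)
    (hU : U = X ^ m + ∑ i ∈ Finset.Icc 1 m, C (u i) * X ^ (m - i))
    (hnoroot : ∀ z : ℂ, aeval z U = 0 → aeval z f ≠ 0)
    (M : ℕ) (hM0 : 0 < M)
    (hMmin : ∀ M' : ℕ, 0 < M' →
      (∀ n : ℕ, ∃ z : ℤ, (M' : ℚ) * U.coeff n = (z : ℚ)) → M ≤ M')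
    (a₀ : ℕ) (ha₀ : 0 < a₀)
    (ha₀int : ∀ i ∈ Finset.Icc 1 m, ∃ z : ℤ, (a₀ : ℚ) * u i = (z : ℚ)) :
    (1/2) * Real.log (∑ i : Fin (2*g+1),
        ‖aeval (ω i) U‖ / ‖aeval (ω i) (derivative f)‖) ≤
      (1/2) * ((m : ℝ) - 2*g + δ * (g * (2*g+1) : ℝ)) * Real.log Xr
        + (1/2) * Real.log ((Finset.range (m+1)).sup'
            (Finset.nonempty_range_iff.mpr (Nat.succ_ne_zero m))
            fun i => if i = 0 then 1 else |(u i : ℝ)|)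
        + (1/2) * Real.log (((m+1) * (2*g+1) * 2^(m + 2*g*(2*g-1)) : ℝ))
    ∧
    (1/2) * Real.log (M : ℝ) + (1/2) * Real.log (∑ i : Fin (2*g+1),
        ‖aeval (ω i) U‖ / ‖aeval (ω i) (derivative f)‖) ≤
      (1/2) * Real.log ((Finset.range (m+1)).sup'
          (Finset.nonempty_range_iff.mpr (Nat.succ_ne_zero m))
          fun i => if i = 0 then (a₀ : ℝ) else |(a₀ : ℝ) * (u i : ℝ)|)
        + (1/2) * ((m : ℝ) - 2*g + δ * (g * (2*g+1) : ℝ)) * Real.log Xr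
        + (1/2) * Real.log (((m+1) * (2*g+1) * 2^(m + 2*g*(2*g-1)) : ℝ)) := by
  set B := (range (m+1)).sup' (nonempty_range_iff.mpr (Nat.succ_ne_zero m))
    fun i => if i = 0 then (1 : ℝ) else |(u i : ℝ)| with hB
  have hB1 : 1 ≤ B := le_sup'_of_le _ (mem_range.mpr m.succ_pos) (by simp)
  have hBu : ∀ i ∈ Icc 1 m, |(u i : ℝ)| ≤ B := fun i hi => by
    have hi := mem_Icc.mp hi
    exact le_sup'_of_le _ (b := i) (mem_range.mpr (by omega)) (by rw [if_neg (by omega)])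
  have hX1 : 1 ≤ Xr := one_le_of_abs_coeff_rpow_one_div_lt hdisc (i₀ := 2*g+1) (i₁ := 2*g)
    (by simpa only [Nat.sub_self] using hHt (2*g+1) (by simp; omega))
    (by simpa only [show 2*g+1-2*g = 1 by omega] using hHt (2*g) (by simp; omega))
  have hfroot : ∀ i, aeval (ω i) f = 0 := fun i => by
    rw [← eval_map_algebraMap, hroots, eval_prod]
    exact prod_eq_zero (mem_univ i) (by simp)
  have hω : ∀ i, ‖ω i‖ ≤ 2 * Xr := fun i =>
    norm_le_two_mul_of_aeval_eq_zero hmonic hXr.le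
      (hdeg ▸ abs_coeff_le_pow_of_abs_rpow_lt hXr.le hcoeff hHt) (hfroot i)
  have hf' : ∀ i, aeval (ω i) (derivative f) = ∏ j ∈ univ.erase i, (ω i - ω j) := fun i => by
    rw [← eval_map_algebraMap, ← derivative_map, hroots, eval_derivative_prod_X_sub_C]
  have first := half_log_sum_div_le (m := m) (a := fun i => ‖aeval (ω i) U‖)
    (b := fun i => ‖aeval (ω i) (derivative f)‖) hδ.le hX1 hB1
    (fun i => ⟨norm_pos_iff.mpr fun h => hnoroot _ h (hfroot i),
      hU ▸ norm_aeval_X_pow_add_sum_le hB1 hBu (by linarith) (hω i)⟩)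
    (fun i => by
      simpa [hf' i] using pow_le_norm_prod_erase_sub ω (by positivity) hsep i)
  refine ⟨first, ?_⟩
  have hM : (M : ℝ) ≤ a₀ := by
    exact_mod_cast hMmin a₀ ha₀ (hU ▸ exists_intCast_eq_mul_coeff_X_pow_add_sum ha₀int)
  have hscale : (range (m+1)).sup' (nonempty_range_iff.mpr (Nat.succ_ne_zero m))
      (fun i => if i = 0 then (a₀ : ℝ) else |(a₀ : ℝ) * (u i : ℝ)|) = a₀ * B := by
    rw [hB, ← sup'_mul_left_of_nonneg _ _ (Nat.cast_nonneg a₀)]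
    congr 1 with i
    split_ifs <;> simp [abs_mul]
  rw [hscale, Real.log_mul (by positivity) (by positivity)]
  have := Real.log_le_log (by positivity) hM
  linarith

theorem stmt_15 (g : ℕ) (hg : 1 ≤ g) (δ Xr : ℝ) (hδ : 0 < δ) (hXr : 0 < Xr)
    (f : Polynomial ℤ) (hmonic : f.Monic) (hdeg : f.natDegree = 2*g+1)
    (hcoeff : f.coeff (2*g) = 0) (hdisc : Squarefree (f.map (algebraMap ℤ ℚ)))
    (hHt : ∀ i ∈ Finset.Icc 2 (2*g+1), |(f.coeff (2*g+1-i) : ℝ)| ^ ((1:ℝ)/(i:ℝ)) < Xr)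
    (ω : Fin (2*g+1) → ℂ)
    (hroots : f.map (algebraMap ℤ ℂ) = ∏ i : Fin (2*g+1), (X - C (ω i)))
    (hsep : ∀ i j : Fin (2*g+1), i ≠ j → ‖ω i - ω j‖ > Xr ^ ((1:ℝ) - δ))
    (m : ℕ) (hm1 : 1 ≤ m) (hmg : m ≤ g)
    (u : ℕ → ℚ) (U : Polynomial ℚ)
    (hU : U = X ^ m + ∑ i ∈ Finset.Icc 1 m, C (u i) * X ^ (m - i))
    (hnoroot : ∀ z : ℂ, aeval z U = 0 → aeval z f ≠ 0)
    (M : ℕ) (hM0 : 0 < M)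
    (hMint : ∀ n : ℕ, ∃ z : ℤ, (M : ℚ) * U.coeff n = (z : ℚ))
    (hMmin : ∀ M' : ℕ, 0 < M' →
      (∀ n : ℕ, ∃ z : ℤ, (M' : ℚ) * U.coeff n = (z : ℚ)) → M ≤ M')
    (a₀ : ℕ) (ha₀ : 0 < a₀)
    (ha₀int : ∀ i ∈ Finset.Icc 1 m, ∃ z : ℤ, (a₀ : ℚ) * u i = (z : ℚ))
    (ha₀min : ∀ b : ℕ, 0 < b →
      (∀ i ∈ Finset.Icc 1 m, ∃ z : ℤ, (b : ℚ) * u i = (z : ℚ)) → a₀ ≤ b) :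
    (1/2) * Real.log (∑ i : Fin (2*g+1),
        ‖aeval (ω i) U‖ / ‖aeval (ω i) (derivative f)‖) ≤
      (1/2) * ((m : ℝ) - 2*g + δ * (g * (2*g+1) : ℝ)) * Real.log Xr
        + (1/2) * Real.log ((Finset.range (m+1)).sup'
            (Finset.nonempty_range_iff.mpr (Nat.succ_ne_zero m))
            fun i => if i = 0 then 1 else |(u i : ℝ)|)
        + (1/2) * Real.log (((m+1) * (2*g+1) * 2^(m + 2*g*(2*g-1)) : ℝ))
    ∧
    (1/2) * Real.log (M : ℝ) + (1/2) * Real.log (∑ i : Fin (2*g+1),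
        ‖aeval (ω i) U‖ / ‖aeval (ω i) (derivative f)‖) ≤
      (1/2) * Real.log ((Finset.range (m+1)).sup'
          (Finset.nonempty_range_iff.mpr (Nat.succ_ne_zero m))
          fun i => if i = 0 then (a₀ : ℝ) else |(a₀ : ℝ) * (u i : ℝ)|)
        + (1/2) * ((m : ℝ) - 2*g + δ * (g * (2*g+1) : ℝ)) * Real.log Xr
        + (1/2) * Real.log (((m+1) * (2*g+1) * 2^(m + 2*g*(2*g-1)) : ℝ)) :=
  stmt_15_general g hg δ Xr hδ hXr f hmonic hdeg hcoeff hdisc hHt ω hroots hsep m u U hU hnoroot M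
    hM0 hMmin a₀ ha₀ ha₀int
end
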